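/- arXiv:1210.5475 — 2 statements merged into one kernel-verified Lean document; each statement's English description precedes it below -/
import Mathlib

section
/- Existence and uniqueness of the Harder-Narasimhan filtration: every nonzero finite dimensional representation M of a finite quiver has a unique filtration 0 ⊂ M₁ ⊂ M₂ ⊂ ... ⊂ M_t ⊂ M_{t+1} = M such that, writing M^i = M_i/M_{i-1}: (1) μ(M^1) > μ(M^2) > ... > μ(M^{t+1}), and (2) each quotient M^i is (Θ,σ)-semistable. -/
open Finset

/-- A subrepresentation of a fixed representation `M` of a quiver with vertex set `V`,
arrow set `E`, source/target maps `src tgt : E → V` and structure maps `f`. -/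
structure Subrep {k V E : Type} [Field k] (M : V → Type) [∀ v, AddCommGroup (M v)]
    [∀ v, Module k (M v)] (src tgt : E → V) (f : ∀ e, M (src e) →ₗ[k] M (tgt e)) : Type where
  N : ∀ v, Submodule k (M v)
  compat : ∀ e, (N (src e)).map (f e) ≤ N (tgt e)

namespace Subrep

variable {k V E : Type} [Field k] [Fintype V] {M : V → Type}
  [∀ v, AddCommGroup (M v)] [∀ v, Module k (M v)] [∀ v, FiniteDimensional k (M v)]
  {src tgt : E → V} {f : ∀ e, M (src e) →ₗ[k] M (tgt e)}

instance : PartialOrder (Subrep M src tgt f) :=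
  PartialOrder.lift Subrep.N (fun A B h => by cases A; cases B; simpa using h)

/-- The zero subrepresentation. -/
def bot : Subrep M src tgt f := ⟨fun _ => ⊥, fun e => by simp⟩

/-- The whole representation `M` as a subrepresentation of itself. -/
def top : Subrep M src tgt f := ⟨fun _ => ⊤, fun e => le_top⟩

/-- Sum of two subrepresentations. -/
def sup (A B : Subrep M src tgt f) : Subrep M src tgt f :=
  ⟨fun v => A.N v ⊔ B.N v, fun e => by
    rw [Submodule.map_sup]
    exact sup_le_sup (A.compat e) (B.compat e)⟩

/-- `tot c A = ∑_v c_v · dim A_v`; gives `Θ(A)` resp. `σ(A)` for `c = Θ` resp. `σ`. -/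
noncomputable def tot (c : V → ℤ) (A : Subrep M src tgt f) : ℤ :=
  ∑ v, c v * (Module.finrank k (A.N v) : ℤ)

/-- The slope `μ(A) = Θ(A)/σ(A)` as a rational number. -/
noncomputable def slope (Θ σ : V → ℤ) (A : Subrep M src tgt f) : ℚ :=
  (tot Θ A : ℚ) / (tot σ A : ℚ)

/-- The slope of the quotient `B/A` for `A ≤ B`. -/
noncomputable def quotSlope (Θ σ : V → ℤ) (A B : Subrep M src tgt f) : ℚ :=
  ((tot Θ B - tot Θ A : ℤ) : ℚ) / ((tot σ B - tot σ A : ℤ) : ℚ)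

/-- `(Θ,σ)`-semistability of the subrepresentation `A`, viewed as a representation itself:
every nonzero proper subrepresentation of `A` has slope at most `μ(A)`. -/
def Semistable (Θ σ : V → ℤ) (A : Subrep M src tgt f) : Prop :=
  ∀ B : Subrep M src tgt f, B ≤ A → B ≠ bot → B ≠ A → slope Θ σ B ≤ slope Θ σ A

/-- `(Θ,σ)`-semistability of the quotient representation `B/A`, expressed via the
correspondence between subrepresentations of `B/A` and subrepresentations `P` with
`A ≤ P ≤ B`. -/
def QuotSemistable (Θ σ : V → ℤ) (A B : Subrep M src tgt f) : Prop :=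
  ∀ P : Subrep M src tgt f, A ≤ P → P ≤ B → P ≠ A → quotSlope Θ σ A P ≤ quotSlope Θ σ A B

/-- `F` (indexed by `ℕ`, constant equal to `⊤` from `n+1` on) is a Harder–Narasimhan
filtration `0 = F 0 ⊂ F 1 ⊂ ⋯ ⊂ F (n+1) = M` : successive quotients have strictly
decreasing slopes and are `(Θ,σ)`-semistable. -/
def IsHNFiltration (Θ σ : V → ℤ) (n : ℕ) (F : ℕ → Subrep M src tgt f) : Prop :=
  F 0 = bot ∧ (∀ i, n + 1 ≤ i → F i = top) ∧
  (∀ i ≤ n, F i < F (i+1)) ∧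
  (∀ i, i + 1 ≤ n → quotSlope Θ σ (F (i+1)) (F (i+2)) < quotSlope Θ σ (F i) (F (i+1))) ∧
  (∀ i ≤ n, QuotSemistable Θ σ (F i) (F (i+1)))

end Subrep


namespace Subrep

variable {k V E : Type} [Field k] [Fintype V] {M : V → Type}
  [∀ v, AddCommGroup (M v)] [∀ v, Module k (M v)] [∀ v, FiniteDimensional k (M v)]
  {src tgt : E → V} {f : ∀ e, M (src e) →ₗ[k] M (tgt e)}

-- my aux
lemma ext' {A B : Subrep M src tgt f} (h : A.N = B.N) : A = B := by
  cases A; cases B; simpa using h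

lemma le_def' {A B : Subrep M src tgt f} : A ≤ B ↔ ∀ v, A.N v ≤ B.N v := Iff.rfl

lemma subLeTop (A : Subrep M src tgt f) : A ≤ top := fun _ => le_top

def inf' (A B : Subrep M src tgt f) : Subrep M src tgt f :=
  ⟨fun v => A.N v ⊓ B.N v, fun e => le_inf
    (le_trans (Submodule.map_mono inf_le_left) (A.compat e))
    (le_trans (Submodule.map_mono inf_le_right) (B.compat e))⟩

lemma le_sup_left' (A B : Subrep M src tgt f) : A ≤ Subrep.sup A B := fun v => le_sup_left
lemma le_sup_right' (A B : Subrep M src tgt f) : B ≤ Subrep.sup A B := fun v => le_sup_right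
lemma le_inf' {A B C : Subrep M src tgt f} (h1 : C ≤ A) (h2 : C ≤ B) : C ≤ inf' A B :=
  fun v => le_inf (h1 v) (h2 v)

lemma tot_modular (c : V → ℤ) (A B : Subrep M src tgt f) :
    tot c (Subrep.sup A B) + tot c (inf' A B) = tot c A + tot c B := by
  unfold tot Subrep.sup inf'
  rw [← Finset.sum_add_distrib, ← Finset.sum_add_distrib]
  refine Finset.sum_congr rfl fun v _ => ?_
  have h : (Module.finrank k ↥(A.N v ⊔ B.N v) : ℤ) + (Module.finrank k ↥(A.N v ⊓ B.N v) : ℤ)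
      = (Module.finrank k (A.N v) : ℤ) + (Module.finrank k (B.N v) : ℤ) := by
    exact_mod_cast Submodule.finrank_sup_add_finrank_inf_eq (A.N v) (B.N v)
  linear_combination c v * h

lemma tot_le_of_le {c : V → ℤ} (hc : ∀ v, 0 ≤ c v) {A B : Subrep M src tgt f} (h : A ≤ B) :
    tot c A ≤ tot c B :=
  Finset.sum_le_sum fun v _ => mul_le_mul_of_nonneg_left
    (by exact_mod_cast Submodule.finrank_mono (h v)) (hc v)

lemma tot_nonneg {c : V → ℤ} (hc : ∀ v, 0 ≤ c v) (A : Subrep M src tgt f) : 0 ≤ tot c A :=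
  Finset.sum_nonneg fun v _ => mul_nonneg (hc v) (Int.natCast_nonneg _)

lemma tot_lt_of_lt {σ : V → ℤ} (hσ : ∀ v, 0 < σ v) {A B : Subrep M src tgt f} (h : A < B) :
    tot σ A < tot σ B := by
  obtain ⟨hle, hne⟩ := lt_iff_le_and_ne.mp h
  have : ∃ v, A.N v ≠ B.N v := by
    by_contra hco
    push_neg at hco
    exact hne (ext' (funext hco))
  obtain ⟨v, hv⟩ := this
  refine Finset.sum_lt_sum (fun w _ => mul_le_mul_of_nonneg_left
    (by exact_mod_cast Submodule.finrank_mono (hle w)) (hσ w).le) ⟨v, Finset.mem_univ v, ?_⟩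
  have : A.N v < B.N v := lt_of_le_of_ne (hle v) hv
  exact mul_lt_mul_of_pos_left
    (by exact_mod_cast Submodule.finrank_lt_finrank_of_lt this) (hσ v)

lemma eq_of_le_tot_eq {σ : V → ℤ} (hσ : ∀ v, 0 < σ v) {A B : Subrep M src tgt f}
    (h : A ≤ B) (ht : tot σ A = tot σ B) : A = B := by
  by_contra hne
  exact absurd ht (ne_of_lt (tot_lt_of_lt hσ (lt_of_le_of_ne h hne)))

lemma tot_abs_le (c : V → ℤ) (A : Subrep M src tgt f) :
    |tot c A| ≤ ∑ v, |c v| * (Module.finrank k (M v) : ℤ) := by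
  refine le_trans (Finset.abs_sum_le_sum_abs _ _) (Finset.sum_le_sum fun v _ => ?_)
  rw [abs_mul]
  refine mul_le_mul_of_nonneg_left ?_ (abs_nonneg _)
  rw [abs_of_nonneg (by positivity)]
  exact_mod_cast Submodule.finrank_le (A.N v)

noncomputable def dd (c : V → ℤ) (A B : Subrep M src tgt f) : ℚ :=
  ((tot c B - tot c A : ℤ) : ℚ)

lemma quotSlope_def (Θ σ : V → ℤ) (A B : Subrep M src tgt f) :
    quotSlope Θ σ A B = dd Θ A B / dd σ A B := rfl

lemma dd_add (c : V → ℤ) (A B C : Subrep M src tgt f) :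
    dd c A C = dd c A B + dd c B C := by unfold dd; push_cast; ring

lemma dd_self (c : V → ℤ) (A : Subrep M src tgt f) : dd c A A = 0 := by unfold dd; simp

lemma dd_pos {σ : V → ℤ} (hσ : ∀ v, 0 < σ v) {A B : Subrep M src tgt f} (h : A < B) :
    0 < dd σ A B := by
  have := tot_lt_of_lt hσ h
  unfold dd
  exact_mod_cast (by omega : (0:ℤ) < tot σ B - tot σ A)

lemma dd_mono {σ : V → ℤ} (hσ : ∀ v, 0 < σ v) {A B C : Subrep M src tgt f}
    (h : B ≤ C) : dd σ A B ≤ dd σ A C := by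
  have := tot_le_of_le (fun v => (hσ v).le) h
  unfold dd
  exact_mod_cast (by omega : tot σ B - tot σ A ≤ tot σ C - tot σ A)

lemma dd_modular (c : V → ℤ) (A P Q : Subrep M src tgt f) :
    dd c A (Subrep.sup P Q) + dd c A (inf' P Q) = dd c A P + dd c A Q := by
  have := tot_modular c P Q
  unfold dd
  push_cast
  have h : ((tot c (Subrep.sup P Q) : ℤ) : ℚ) + ((tot c (inf' P Q) : ℤ) : ℚ)
      = ((tot c P : ℤ) : ℚ) + ((tot c Q : ℤ) : ℚ) := by exact_mod_cast this
  linarith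

variable {Θ σ : V → ℤ}

lemma quotSlope_le_iff (hσ : ∀ v, 0 < σ v) {A B : Subrep M src tgt f} (h : A < B) {x : ℚ} :
    quotSlope Θ σ A B ≤ x ↔ dd Θ A B ≤ x * dd σ A B := by
  rw [quotSlope_def, div_le_iff₀ (dd_pos hσ h)]

lemma le_quotSlope_iff (hσ : ∀ v, 0 < σ v) {A B : Subrep M src tgt f} (h : A < B) {x : ℚ} :
    x ≤ quotSlope Θ σ A B ↔ x * dd σ A B ≤ dd Θ A B := by
  rw [quotSlope_def, le_div_iff₀ (dd_pos hσ h)]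

lemma quotSlope_lt_iff (hσ : ∀ v, 0 < σ v) {A B : Subrep M src tgt f} (h : A < B) {x : ℚ} :
    quotSlope Θ σ A B < x ↔ dd Θ A B < x * dd σ A B := by
  rw [quotSlope_def, div_lt_iff₀ (dd_pos hσ h)]

lemma lt_quotSlope_iff (hσ : ∀ v, 0 < σ v) {A B : Subrep M src tgt f} (h : A < B) {x : ℚ} :
    x < quotSlope Θ σ A B ↔ x * dd σ A B < dd Θ A B := by
  rw [quotSlope_def, lt_div_iff₀ (dd_pos hσ h)]

lemma quotSlope_eq_iff (hσ : ∀ v, 0 < σ v) {A B : Subrep M src tgt f} (h : A < B) {x : ℚ} :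
    quotSlope Θ σ A B = x ↔ dd Θ A B = x * dd σ A B := by
  constructor
  · intro hx
    exact le_antisymm ((quotSlope_le_iff hσ h).mp hx.le) ((le_quotSlope_iff hσ h).mp hx.ge)
  · intro hx
    exact le_antisymm ((quotSlope_le_iff hσ h).mpr hx.le) ((le_quotSlope_iff hσ h).mpr hx.ge)

lemma exists_destab (Θ σ : V → ℤ) (hσ : ∀ v, 0 < σ v) (A : Subrep M src tgt f)
    (hA : A ≠ top) :
    ∃ D : Subrep M src tgt f, A < D ∧
      (∀ P, A < P → quotSlope Θ σ A P ≤ quotSlope Θ σ A D) ∧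
      (∀ P, A < P → quotSlope Θ σ A D ≤ quotSlope Θ σ A P → P ≤ D) := by
  have hAtop : A < top := lt_of_le_of_ne (subLeTop A) hA
  set C : ℤ := ∑ v, |Θ v| * (Module.finrank k (M v) : ℤ) with hC
  set S : ℤ := tot σ (top : Subrep M src tgt f) with hS
  -- value set of quotient slopes
  set T : Set ℚ := {x | ∃ P : Subrep M src tgt f, A < P ∧ quotSlope Θ σ A P = x} with hT
  have hTfin : T.Finite := by
    refine Set.Finite.subset (Finset.finite_toSet
      ((Finset.Icc (-(2*C)) (2*C) ×ˢ Finset.Icc (1:ℤ) S).image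
        fun p => (p.1 : ℚ) / (p.2 : ℚ))) ?_
    rintro x ⟨P, hP, rfl⟩
    simp only [Finset.coe_image, Set.mem_image, Finset.mem_coe, Finset.mem_product,
      Finset.mem_Icc]
    refine ⟨(tot Θ P - tot Θ A, tot σ P - tot σ A), ⟨⟨?_, ?_⟩, ?_, ?_⟩, rfl⟩
    · have h1 := tot_abs_le Θ P
      have h2 := tot_abs_le Θ A
      rw [← hC] at h1 h2
      have := abs_le.mp h1
      have := abs_le.mp h2
      omega
    · have h1 := tot_abs_le Θ P
      have h2 := tot_abs_le Θ A
      rw [← hC] at h1 h2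
      have := abs_le.mp h1
      have := abs_le.mp h2
      omega
    · have := tot_lt_of_lt hσ hP
      omega
    · have h1 := tot_le_of_le (fun v => (hσ v).le) (subLeTop P)
      have h2 := tot_nonneg (fun v => (hσ v).le) A
      omega
  have hTne : T.Nonempty := ⟨quotSlope Θ σ A top, top, hAtop, rfl⟩
  obtain ⟨μ, hμT, hμmax'⟩ := Set.exists_max_image T id hTfin hTne
  obtain ⟨P₀, hP₀lt, hP₀eq⟩ := hμT
  have hμmax : ∀ P, A < P → quotSlope Θ σ A P ≤ μ := fun P hP => hμmax' _ ⟨P, hP, rfl⟩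
  -- second maximization: dimension among slope maximizers
  set T2 : Set ℤ := {b | ∃ P : Subrep M src tgt f,
    A < P ∧ quotSlope Θ σ A P = μ ∧ tot σ P = b} with hT2
  have hT2fin : T2.Finite := by
    refine Set.Finite.subset (Set.finite_Icc (0:ℤ) S) ?_
    rintro b ⟨P, hP, _, rfl⟩
    exact Set.mem_Icc.mpr ⟨tot_nonneg (fun v => (hσ v).le) P,
      tot_le_of_le (fun v => (hσ v).le) (subLeTop P)⟩
  have hT2ne : T2.Nonempty := ⟨tot σ P₀, P₀, hP₀lt, hP₀eq, rfl⟩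
  obtain ⟨b, hbT, hbmax'⟩ := Set.exists_max_image T2 id hT2fin hT2ne
  obtain ⟨D, hDlt, hDμ, hDb⟩ := hbT
  have hbmax : ∀ P, A < P → quotSlope Θ σ A P = μ → tot σ P ≤ tot σ D := by
    intro P hP hPμ
    rw [hDb]
    exact hbmax' _ ⟨P, hP, hPμ, rfl⟩
  refine ⟨D, hDlt, ?_, ?_⟩
  · intro P hP
    rw [hDμ]
    exact hμmax P hP
  · intro P hP hle
    have hPμ : quotSlope Θ σ A P = μ := le_antisymm (hμmax P hP) (hDμ ▸ hle)
    set B := Subrep.sup P D with hB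
    set I := inf' P D with hI
    have hAI : A ≤ I := le_inf' hP.le hDlt.le
    have hAB : A < B := lt_of_lt_of_le hDlt (le_sup_right' P D)
    have hmodΘ := dd_modular Θ A P D
    have hmodσ := dd_modular σ A P D
    have hP' : dd Θ A P = μ * dd σ A P := (quotSlope_eq_iff hσ hP).mp hPμ
    have hD' : dd Θ A D = μ * dd σ A D := (quotSlope_eq_iff hσ hDlt).mp hDμ
    have hI' : dd Θ A I ≤ μ * dd σ A I := by
      rcases eq_or_lt_of_le hAI with hEq | hLt
      · rw [← hEq, dd_self, dd_self]; simp
      · exact (quotSlope_le_iff hσ hLt).mp (hμmax I hLt)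
    have hBμ : quotSlope Θ σ A B = μ := by
      refine le_antisymm (hμmax B hAB) ((le_quotSlope_iff hσ hAB).mpr ?_)
      rw [← hB, ← hI] at hmodΘ hmodσ
      have h5 : μ * dd σ A B = μ * dd σ A P + μ * dd σ A D - μ * dd σ A I := by
        linear_combination μ * hmodσ
      linarith
    have hBD : tot σ B ≤ tot σ D := hbmax B hAB hBμ
    have hDB : D ≤ B := le_sup_right' P D
    have hBeq : D = B := eq_of_le_tot_eq hσ hDB
      (le_antisymm (tot_le_of_le (fun v => (hσ v).le) hDB) hBD)
    rw [hBeq]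
    exact le_sup_left' P D

lemma destab_strict (hσ : ∀ v, 0 < σ v) {A D D' : Subrep M src tgt f}
    (hAD : A < D) (hDD' : D < D')
    (hmaxA : ∀ P, A < P → quotSlope Θ σ A P ≤ quotSlope Θ σ A D)
    (hgrA : ∀ P, A < P → quotSlope Θ σ A D ≤ quotSlope Θ σ A P → P ≤ D) :
    quotSlope Θ σ D D' < quotSlope Θ σ A D := by
  by_contra hcon
  push_neg at hcon
  have hAD' : A < D' := hAD.trans hDD'
  set μ := quotSlope Θ σ A D with hμ
  have h1 : μ * dd σ D D' ≤ dd Θ D D' := (le_quotSlope_iff hσ hDD').mp hcon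
  have h2 : dd Θ A D = μ * dd σ A D := (quotSlope_eq_iff hσ hAD).mp rfl
  have h3 : μ * dd σ A D' ≤ dd Θ A D' := by
    have h5 : μ * dd σ A D' = μ * dd σ A D + μ * dd σ D D' := by
      linear_combination μ * dd_add σ A D D'
    rw [dd_add Θ A D D']
    linarith
  have h4 : quotSlope Θ σ A D ≤ quotSlope Θ σ A D' := (le_quotSlope_iff hσ hAD').mpr h3
  exact absurd (hgrA D' hAD' h4) (not_le_of_gt hDD')

lemma inf_le_right'' (A B : Subrep M src tgt f) : inf' A B ≤ B := fun v => inf_le_right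

lemma hn_bound (hσ : ∀ v, 0 < σ v) {n : ℕ} {F : ℕ → Subrep M src tgt f}
    (hF : IsHNFiltration Θ σ n F) :
    ∀ d j, j + d = n → ∀ P, F j < P →
      quotSlope Θ σ (F j) P ≤ quotSlope Θ σ (F j) (F (j+1)) ∧
      (quotSlope Θ σ (F j) (F (j+1)) ≤ quotSlope Θ σ (F j) P → P ≤ F (j+1)) := by
  obtain ⟨h0, htop, hlt, hdec, hss⟩ := hF
  intro d
  induction d with
  | zero =>
    intro j hj P hP
    have htp : F (j+1) = top := htop _ (by omega)
    constructor
    · exact hss j (by omega) P hP.le (htp ▸ subLeTop P) hP.ne'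
    · intro _; rw [htp]; exact subLeTop P
  | succ d ih =>
    intro j hj P hP
    have hjn : j ≤ n := by omega
    have hj1 : j + 1 ≤ n := by omega
    by_cases hPle : P ≤ F (j+1)
    · exact ⟨hss j hjn P hP.le hPle hP.ne', fun _ => hPle⟩
    · set B := Subrep.sup P (F (j+1)) with hBdef
      have hFB : F (j+1) < B :=
        lt_of_le_of_ne (le_sup_right' _ _) (fun hEq => hPle (hEq ▸ le_sup_left' P (F (j+1))))
      have h1 : quotSlope Θ σ (F (j+1)) B ≤ quotSlope Θ σ (F (j+1)) (F (j+2)) :=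
        (ih (j+1) (by omega) B hFB).1
      have h2 : quotSlope Θ σ (F (j+1)) (F (j+2)) < quotSlope Θ σ (F j) (F (j+1)) :=
        hdec j hj1
      set I := inf' P (F (j+1)) with hIdef
      have hAI : F j ≤ I := le_inf' hP.le (hlt j hjn).le
      set μ1 := quotSlope Θ σ (F j) (F (j+1)) with hμ1
      have hstrict : quotSlope Θ σ (F j) P < μ1 := by
        have hI' : dd Θ (F j) I ≤ μ1 * dd σ (F j) I := by
          rcases eq_or_lt_of_le hAI with hEq | hLt
          · rw [← hEq, dd_self, dd_self]; simp
          · exact (quotSlope_le_iff hσ hLt).mp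
              (hss j hjn I hLt.le (inf_le_right'' P (F (j+1))) hLt.ne')
        have hB' : dd Θ (F (j+1)) B < μ1 * dd σ (F (j+1)) B :=
          (quotSlope_lt_iff hσ hFB).mp (lt_of_le_of_lt h1 h2)
        have hmodΘ := dd_modular Θ (F j) P (F (j+1))
        have hmodσ := dd_modular σ (F j) P (F (j+1))
        have haddΘ : dd Θ (F j) B = dd Θ (F j) (F (j+1)) + dd Θ (F (j+1)) B :=
          dd_add Θ _ _ _
        have haddσ : dd σ (F j) B = dd σ (F j) (F (j+1)) + dd σ (F (j+1)) B :=
          dd_add σ _ _ _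
        rw [← hBdef, ← hIdef] at hmodΘ hmodσ
        have hsum : μ1 * dd σ (F j) P = μ1 * dd σ (F j) I + μ1 * dd σ (F (j+1)) B := by
          linear_combination μ1 * haddσ - μ1 * hmodσ
        refine (quotSlope_lt_iff hσ hP).mpr ?_
        linarith only [hI', hB', hmodΘ, haddΘ, hsum]
      exact ⟨hstrict.le, fun hcon => absurd hcon (not_le_of_gt hstrict)⟩

lemma hn_step_unique (hσ : ∀ v, 0 < σ v) {n m : ℕ} {F G : ℕ → Subrep M src tgt f}
    (hF : IsHNFiltration Θ σ n F) (hG : IsHNFiltration Θ σ m G)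
    {i : ℕ} (hin : i ≤ n) (him : i ≤ m) (hFG : F i = G i) : F (i+1) = G (i+1) := by
  have hFlt : F i < F (i+1) := hF.2.2.1 i hin
  have hGlt : F i < G (i+1) := hFG ▸ hG.2.2.1 i him
  have hbF := hn_bound hσ hF (n - i) i (by omega)
  have hbG := hn_bound hσ hG (m - i) i (by omega)
  rw [← hFG] at hbG
  have h1 : quotSlope Θ σ (F i) (G (i+1)) ≤ quotSlope Θ σ (F i) (F (i+1)) :=
    (hbF (G (i+1)) hGlt).1
  have h2 : quotSlope Θ σ (F i) (F (i+1)) ≤ quotSlope Θ σ (F i) (G (i+1)) :=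
    (hbG (F (i+1)) hFlt).1
  exact le_antisymm ((hbG (F (i+1)) hFlt).2 h1) ((hbF (G (i+1)) hGlt).2 h2)

lemma hn_unique (hσ : ∀ v, 0 < σ v) {n m : ℕ} {F G : ℕ → Subrep M src tgt f}
    (hF : IsHNFiltration Θ σ n F) (hG : IsHNFiltration Θ σ m G) :
    n = m ∧ F = G := by
  have key : ∀ i, i ≤ n + 1 → i ≤ m + 1 → F i = G i := by
    intro i
    induction i with
    | zero => intro _ _; rw [hF.1, hG.1]
    | succ i ih =>
      intro h1 h2
      exact hn_step_unique hσ hF hG (by omega) (by omega) (ih (by omega) (by omega))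
  have hnm : n = m := by
    rcases lt_trichotomy n m with h | h | h
    · exfalso
      have hFt : F (n+1) = top := hF.2.1 (n+1) le_rfl
      have hGl : G (n+1) < G (n+2) := hG.2.2.1 (n+1) (by omega)
      have heq : F (n+1) = G (n+1) := key (n+1) (by omega) (by omega)
      have h5 : top < G (n+2) := by rw [← hFt, heq]; exact hGl
      exact absurd (subLeTop (G (n+2))) (not_le_of_gt h5)
    · exact h
    · exfalso
      have hGt : G (m+1) = top := hG.2.1 (m+1) le_rfl
      have hFl : F (m+1) < F (m+2) := hF.2.2.1 (m+1) (by omega)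
      have heq : F (m+1) = G (m+1) := key (m+1) (by omega) (by omega)
      have h5 : top < F (m+2) := by rw [← hGt, ← heq]; exact hFl
      exact absurd (subLeTop (F (m+2))) (not_le_of_gt h5)
  subst hnm
  refine ⟨rfl, funext fun i => ?_⟩
  by_cases hi : i ≤ n + 1
  · exact key i hi hi
  · rw [hF.2.1 i (by omega), hG.2.1 i (by omega)]

open scoped Classical in
noncomputable def next (Θ σ : V → ℤ) (hσ : ∀ v, 0 < σ v) (A : Subrep M src tgt f) : Subrep M src tgt f :=
  if h : A = top then top else Classical.choose (exists_destab Θ σ hσ A h)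

lemma next_top (hσ : ∀ v, 0 < σ v) : next Θ σ hσ (top : Subrep M src tgt f) = top :=
  dif_pos rfl

lemma next_spec (hσ : ∀ v, 0 < σ v) {A : Subrep M src tgt f} (hA : A ≠ top) :
    A < next Θ σ hσ A ∧
      (∀ P, A < P → quotSlope Θ σ A P ≤ quotSlope Θ σ A (next Θ σ hσ A)) ∧
      (∀ P, A < P → quotSlope Θ σ A (next Θ σ hσ A) ≤ quotSlope Θ σ A P →
        P ≤ next Θ σ hσ A) := by
  rw [next, dif_neg hA]
  exact Classical.choose_spec (exists_destab Θ σ hσ A hA)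

noncomputable def filt (Θ σ : V → ℤ) (hσ : ∀ v, 0 < σ v) : ℕ → Subrep M src tgt f
  | 0 => bot
  | i + 1 => next Θ σ hσ (filt Θ σ hσ i)

lemma filt_top_of_ge (hσ : ∀ v, 0 < σ v) {i j : ℕ} (hij : i ≤ j)
    (h : filt Θ σ hσ i = (top : Subrep M src tgt f)) :
    filt Θ σ hσ j = (top : Subrep M src tgt f) := by
  induction j with
  | zero => rwa [Nat.le_zero.mp hij] at h
  | succ j ih =>
    rcases Nat.lt_or_ge i (j+1) with hlt | hge
    · have hj : filt Θ σ hσ j = (top : Subrep M src tgt f) := ih (by omega)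
      show next Θ σ hσ (filt Θ σ hσ j) = top
      rw [hj, next_top]
    · have hie : i = j + 1 := by omega
      rwa [hie] at h

lemma filt_exists_top (hσ : ∀ v, 0 < σ v) :
    ∃ i, filt Θ σ hσ i = (top : Subrep M src tgt f) := by
  by_contra hco
  push_neg at hco
  have hgrow : ∀ i : ℕ, (i : ℤ) ≤ tot σ (filt Θ σ hσ i : Subrep M src tgt f) := by
    intro i
    induction i with
    | zero => simpa using tot_nonneg (fun v => (hσ v).le) (filt Θ σ hσ 0 : Subrep M src tgt f)
    | succ i ih =>
      have hlt : (filt Θ σ hσ i : Subrep M src tgt f) < filt Θ σ hσ (i+1) :=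
        (next_spec hσ (hco i)).1
      have := tot_lt_of_lt hσ hlt
      push_cast
      omega
  have h1 := hgrow ((tot σ (top : Subrep M src tgt f)).toNat + 1)
  have h2 := tot_le_of_le (fun v => (hσ v).le)
    (subLeTop (filt Θ σ hσ ((tot σ (top : Subrep M src tgt f)).toNat + 1) : Subrep M src tgt f))
  have h3 : 0 ≤ tot σ (top : Subrep M src tgt f) :=
    tot_nonneg (fun v => (hσ v).le) _
  have h4 : (((tot σ (top : Subrep M src tgt f)).toNat + 1 : ℕ) : ℤ)
      = tot σ (top : Subrep M src tgt f) + 1 := by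
    push_cast
    omega
  omega

theorem hn_main (Θ σ : V → ℤ) (hσ : ∀ v, 0 < σ v)
    (hM : (top : Subrep M src tgt f) ≠ bot) :
    ∃! p : ℕ × (ℕ → Subrep M src tgt f), IsHNFiltration Θ σ p.1 p.2 := by
  classical
  have hex := filt_exists_top (Θ := Θ) (σ := σ) hσ (M := M) (src := src) (tgt := tgt)
    (f := f)
  set m := Nat.find hex with hmdef
  have hm : filt Θ σ hσ m = top := Nat.find_spec hex
  have hmmin : ∀ j, j < m → filt Θ σ hσ j ≠ top := fun j hj => Nat.find_min hex hj
  have hm0 : m ≠ 0 := by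
    intro h
    rw [h] at hm
    have hbt : (bot : Subrep M src tgt f) = top := hm
    exact hM hbt.symm
  set n := m - 1 with hndef
  have hHN : IsHNFiltration Θ σ n (filt Θ σ hσ : ℕ → Subrep M src tgt f) := by
    refine ⟨rfl, ?_, ?_, ?_, ?_⟩
    · intro i hi
      exact filt_top_of_ge hσ (by omega) hm
    · intro i hi
      exact (next_spec hσ (hmmin i (by omega))).1
    · intro i hi
      have s1 := next_spec (Θ := Θ) hσ (hmmin i (by omega))
      have s2 := next_spec (Θ := Θ) hσ (hmmin (i+1) (by omega))
      exact destab_strict hσ s1.1 s2.1 s1.2.1 s1.2.2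
    · intro i hi P hle _ hne
      exact (next_spec hσ (hmmin i (by omega))).2.1 P (lt_of_le_of_ne hle (Ne.symm hne))
  refine ⟨(n, filt Θ σ hσ), hHN, ?_⟩
  rintro ⟨n', F'⟩ h'
  obtain ⟨h1, h2⟩ := hn_unique hσ h' hHN
  simp only [Prod.mk.injEq]
  exact ⟨h1, h2⟩

end Subrep

open Subrep in
/-- Existence and uniqueness of the Harder–Narasimhan filtration: every nonzero
representation `M` has a unique filtration `0 = F 0 ⊂ F 1 ⊂ ⋯ ⊂ F (n+1) = M` with
strictly decreasing slopes of successive quotients, each quotient `(Θ,σ)`-semistable. -/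
theorem harder_narasimhan {k V E : Type} [Field k] [Fintype V] {M : V → Type}
    [∀ v, AddCommGroup (M v)] [∀ v, Module k (M v)] [∀ v, FiniteDimensional k (M v)]
    {src tgt : E → V} {f : ∀ e, M (src e) →ₗ[k] M (tgt e)}
    (Θ σ : V → ℤ) (hσ : ∀ v, 0 < σ v)
    (hM : (top : Subrep M src tgt f) ≠ bot) :
    ∃! p : ℕ × (ℕ → Subrep M src tgt f), IsHNFiltration Θ σ p.1 p.2 :=
  Subrep.hn_main Θ σ hσ hM
end

section
/- Any nonzero subrepresentation N ⊆ M satisfies μ(N) ≤ μ(M₁), where M₁ is the first step of the Harder-Narasimhan filtration of M (the maximal destabilizing subrepresentation); and if μ(N) = μ(M₁) then N ⊆ M₁. -/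
open Finset

/-!
Put `μ = μ(F 1)` and `d(A) = Θ(A) - μ σ(A)`, which, unlike the slope, is additive. Each increment
`(N ⊓ F (i+1)) / (N ⊓ F i)` embeds into the semistable quotient `F (i+1) / F i`, whose slope is `μ`
for `i = 0` and `< μ` afterwards. Hence `d(N ⊓ F 1) ≤ 0`, and `d(N ⊓ F i)` strictly decreases at
every later step where `N ⊓ F i` grows; so `d(N) ≤ 0`, with equality only if `N ≤ F 1`.
-/

namespace Subrep

section Lattice

variable {k V E : Type} [Field k] {M : V → Type} [∀ v, AddCommGroup (M v)] [∀ v, Module k (M v)]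
  {src tgt : E → V} {f : ∀ e, M (src e) →ₗ[k] M (tgt e)}

instance : Lattice (Subrep M src tgt f) where
  sup := sup
  le_sup_left _ _ _ := le_sup_left
  le_sup_right _ _ _ := le_sup_right
  sup_le _ _ _ hA hB v := sup_le (hA v) (hB v)
  inf A B := ⟨fun v => A.N v ⊓ B.N v, fun e => le_inf
    ((Submodule.map_mono inf_le_left).trans (A.compat e))
    ((Submodule.map_mono inf_le_right).trans (B.compat e))⟩
  inf_le_left _ _ _ := inf_le_left
  inf_le_right _ _ _ := inf_le_right
  le_inf _ _ _ hB hC v := le_inf (hB v) (hC v)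

instance : BoundedOrder (Subrep M src tgt f) where
  bot := bot
  bot_le _ _ := bot_le
  top := top
  le_top _ _ := le_top

theorem bot_eq : (bot : Subrep M src tgt f) = ⊥ := rfl

theorem top_eq : (top : Subrep M src tgt f) = ⊤ := rfl

theorem sup_N (A B : Subrep M src tgt f) (v : V) : (A ⊔ B).N v = A.N v ⊔ B.N v := rfl

theorem inf_N (A B : Subrep M src tgt f) (v : V) : (A ⊓ B).N v = A.N v ⊓ B.N v := rfl

end Lattice

variable {k V E : Type} [Field k] [Fintype V] {M : V → Type}
  [∀ v, AddCommGroup (M v)] [∀ v, Module k (M v)]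
  {src tgt : E → V} {f : ∀ e, M (src e) →ₗ[k] M (tgt e)}

theorem tot_bot (c : V → ℤ) : tot c (⊥ : Subrep M src tgt f) = 0 := by
  refine Finset.sum_eq_zero fun v _ => ?_
  rw [show Module.finrank k ((⊥ : Subrep M src tgt f).N v) = 0 from finrank_bot k (M v)]
  simp

section FiniteDimensional

variable [∀ v, FiniteDimensional k (M v)]

theorem tot_strictMono {σ : V → ℤ} (hσ : ∀ v, 0 < σ v) :
    StrictMono (tot σ : Subrep M src tgt f → ℤ) := by
  intro A B hAB
  obtain ⟨hle, v, hv⟩ := Pi.lt_def.1 (show A.N < B.N from hAB)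
  refine Finset.sum_lt_sum (fun w _ => ?_) ⟨v, Finset.mem_univ v, ?_⟩
  · exact mul_le_mul_of_nonneg_left (by exact_mod_cast Submodule.finrank_mono (hle w)) (hσ w).le
  · exact mul_lt_mul_of_pos_left (by exact_mod_cast Submodule.finrank_lt_finrank_of_lt hv) (hσ v)

theorem tot_sup_add_tot_inf (c : V → ℤ) (A B : Subrep M src tgt f) :
    tot c (A ⊔ B) + tot c (A ⊓ B) = tot c A + tot c B := by
  simp only [tot, ← Finset.sum_add_distrib, ← mul_add]
  refine Finset.sum_congr rfl fun v _ => ?_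
  rw [sup_N, inf_N]
  have := Submodule.finrank_sup_add_finrank_inf_eq (A.N v) (B.N v)
  rw [← Nat.cast_add, this, Nat.cast_add]

end FiniteDimensional

variable (Θ σ : V → ℤ) (c : ℚ)

theorem quotSlope_bot (A : Subrep M src tgt f) : quotSlope Θ σ ⊥ A = slope Θ σ A := by
  simp [quotSlope, slope, tot_bot]

noncomputable def defect (A : Subrep M src tgt f) : ℚ := tot Θ A - c * tot σ A

theorem defect_bot : defect Θ σ c (⊥ : Subrep M src tgt f) = 0 := by
  simp [defect, tot_bot]

theorem defect_slope_self {A : Subrep M src tgt f} (hA : tot σ A ≠ 0) :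
    defect Θ σ (slope Θ σ A) A = 0 := by
  rw [defect, slope, div_mul_cancel₀ _ (by exact_mod_cast hA), sub_self]

variable {Θ σ c}

theorem quotSlope_le_iff_defect_le {A B : Subrep M src tgt f} (hAB : tot σ A < tot σ B) :
    quotSlope Θ σ A B ≤ c ↔ defect Θ σ c B ≤ defect Θ σ c A := by
  rw [quotSlope, div_le_iff₀ (by exact_mod_cast sub_pos.2 hAB), defect, defect]
  push_cast
  constructor <;> intro h <;> linarith

theorem quotSlope_lt_iff_defect_lt {A B : Subrep M src tgt f} (hAB : tot σ A < tot σ B) :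
    quotSlope Θ σ A B < c ↔ defect Θ σ c B < defect Θ σ c A := by
  rw [quotSlope, div_lt_iff₀ (by exact_mod_cast sub_pos.2 hAB), defect, defect]
  push_cast
  constructor <;> intro h <;> linarith

theorem slope_le_iff_defect_nonpos {A : Subrep M src tgt f} (hA : 0 < tot σ A) :
    slope Θ σ A ≤ c ↔ defect Θ σ c A ≤ 0 := by
  rw [← quotSlope_bot, quotSlope_le_iff_defect_le (by rwa [tot_bot]), defect_bot]

theorem quotSlope_sup_le_of_quotSemistable {A B D : Subrep M src tgt f} (hAB : A ≤ B)
    (hss : QuotSemistable Θ σ A B) (hDB : D ≤ B) (hDA : ¬D ≤ A) :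
    quotSlope Θ σ A (D ⊔ A) ≤ quotSlope Θ σ A B :=
  hss _ le_sup_right (sup_le hDB hAB) fun h => hDA (sup_eq_right.1 h)

section FiniteDimensional

variable [∀ v, FiniteDimensional k (M v)]

theorem defect_sup_add_defect_inf (A B : Subrep M src tgt f) :
    defect Θ σ c (A ⊔ B) + defect Θ σ c (A ⊓ B) = defect Θ σ c A + defect Θ σ c B := by
  have hmodΘ : ((tot Θ (A ⊔ B) + tot Θ (A ⊓ B) : ℤ) : ℚ) = (tot Θ A + tot Θ B : ℤ) :=
    congrArg _ (tot_sup_add_tot_inf Θ A B)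
  have hmodσ : ((tot σ (A ⊔ B) + tot σ (A ⊓ B) : ℤ) : ℚ) = (tot σ A + tot σ B : ℤ) :=
    congrArg _ (tot_sup_add_tot_inf σ A B)
  push_cast at hmodΘ hmodσ
  simp only [defect]
  linear_combination hmodΘ - c * hmodσ

variable {A B D : Subrep M src tgt f}

/-- `D/(D ⊓ A) ≅ (D ⊔ A)/A` is a subrepresentation of the semistable quotient `B/A`. -/
theorem defect_le_defect_inf_of_quotSemistable (hσ : ∀ v, 0 < σ v) (hAB : A ≤ B)
    (hss : QuotSemistable Θ σ A B) (hc : quotSlope Θ σ A B ≤ c) (hDB : D ≤ B) :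
    defect Θ σ c D ≤ defect Θ σ c (D ⊓ A) := by
  by_cases hDA : D ≤ A
  · rw [inf_eq_left.2 hDA]
  have hsup := (quotSlope_le_iff_defect_le (tot_strictMono hσ (right_lt_sup.2 hDA))).1
    ((quotSlope_sup_le_of_quotSemistable hAB hss hDB hDA).trans hc)
  linarith [defect_sup_add_defect_inf (Θ := Θ) (σ := σ) (c := c) D A]

theorem defect_lt_defect_inf_of_quotSemistable (hσ : ∀ v, 0 < σ v) (hAB : A ≤ B)
    (hss : QuotSemistable Θ σ A B) (hc : quotSlope Θ σ A B < c) (hDB : D ≤ B) (hDA : ¬D ≤ A) :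
    defect Θ σ c D < defect Θ σ c (D ⊓ A) := by
  have hsup := (quotSlope_lt_iff_defect_lt (tot_strictMono hσ (right_lt_sup.2 hDA))).1
    ((quotSlope_sup_le_of_quotSemistable hAB hss hDB hDA).trans_lt hc)
  linarith [defect_sup_add_defect_inf (Θ := Θ) (σ := σ) (c := c) D A]

end FiniteDimensional

namespace IsHNFiltration

variable {Θ σ : V → ℤ} {n : ℕ} {F : ℕ → Subrep M src tgt f}

theorem quotSlope_lt_slope_one (hF : IsHNFiltration Θ σ n F) {j : ℕ} (hj : 1 ≤ j)
    (hjn : j ≤ n) : quotSlope Θ σ (F j) (F (j + 1)) < slope Θ σ (F 1) := by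
  obtain ⟨hF0, -, -, hdec, -⟩ := hF
  induction j, hj using Nat.le_induction with
  | base => simpa [hF0, bot_eq, quotSlope_bot] using hdec 0 hjn
  | succ j hj ih => exact (hdec j hjn).trans (ih (by omega))

variable [∀ v, FiniteDimensional k (M v)]

theorem defect_inf_one_nonpos (hσ : ∀ v, 0 < σ v) (hF : IsHNFiltration Θ σ n F)
    (N : Subrep M src tgt f) : defect Θ σ (slope Θ σ (F 1)) (N ⊓ F 1) ≤ 0 := by
  obtain ⟨hF0, -, hlt, -, hss⟩ := hF
  have h := defect_le_defect_inf_of_quotSemistable (c := slope Θ σ (F 1)) hσ (hlt 0 (by omega)).le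
    (hss 0 (by omega)) (by rw [hF0, bot_eq, quotSlope_bot]) (inf_le_right : N ⊓ F 1 ≤ F 1)
  rwa [hF0, bot_eq, inf_bot_eq, defect_bot] at h

theorem defect_inf_le_defect_inf_one (hσ : ∀ v, 0 < σ v) (hF : IsHNFiltration Θ σ n F)
    (N : Subrep M src tgt f) {i : ℕ} (hi : 1 ≤ i) (hin : i ≤ n + 1) :
    defect Θ σ (slope Θ σ (F 1)) (N ⊓ F i) ≤ defect Θ σ (slope Θ σ (F 1)) (N ⊓ F 1) ∧
      (defect Θ σ (slope Θ σ (F 1)) (N ⊓ F i) = defect Θ σ (slope Θ σ (F 1)) (N ⊓ F 1) →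
        N ⊓ F i ≤ F 1) := by
  have ⟨_, _, hlt, _, hss⟩ := hF
  induction i, hi using Nat.le_induction with
  | base => exact ⟨le_rfl, fun _ => inf_le_right⟩
  | succ i hi ih =>
    have hFi : F i ≤ F (i + 1) := (hlt i (by omega)).le
    have hinf : N ⊓ F (i + 1) ⊓ F i = N ⊓ F i := by rw [inf_assoc, inf_eq_right.2 hFi]
    by_cases hNi : N ⊓ F (i + 1) ≤ F i
    · rw [le_antisymm (le_inf inf_le_left hNi) (inf_le_inf_left N hFi)]
      exact ih (by omega)
    have hstep := defect_lt_defect_inf_of_quotSemistable hσ hFi (hss i (by omega))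
      (hF.quotSlope_lt_slope_one hi (by omega)) inf_le_right hNi
    rw [hinf] at hstep
    have hprev := (ih (by omega)).1
    exact ⟨by linarith, fun h => by linarith⟩

end IsHNFiltration

end Subrep

open Subrep in
/-- The first step `F 1` of a Harder–Narasimhan filtration dominates every nonzero
subrepresentation in slope: `μ(N) ≤ μ(F 1)` for all nonzero `N ⊆ M`, and if
`μ(N) = μ(F 1)` then `N ⊆ F 1`. -/
theorem first_step_maximal_destabilizing {k V E : Type} [Field k] [Fintype V]
    {M : V → Type}
    [∀ v, AddCommGroup (M v)] [∀ v, Module k (M v)] [∀ v, FiniteDimensional k (M v)]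
    {src tgt : E → V} {f : ∀ e, M (src e) →ₗ[k] M (tgt e)}
    (Θ σ : V → ℤ) (hσ : ∀ v, 0 < σ v)
    (n : ℕ) (F : ℕ → Subrep M src tgt f) (hF : IsHNFiltration Θ σ n F) :
    ∀ N : Subrep M src tgt f, N ≠ bot →
      slope Θ σ N ≤ slope Θ σ (F 1) ∧
      (slope Θ σ N = slope Θ σ (F 1) → N ≤ F 1) := by
  intro N hN
  have hNtop : N ⊓ F (n + 1) = N := by rw [hF.2.1 (n + 1) le_rfl, top_eq, inf_top_eq]
  obtain ⟨hle, heq⟩ := hF.defect_inf_le_defect_inf_one hσ N (by omega) le_rfl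
  rw [hNtop] at hle heq
  have hone := hF.defect_inf_one_nonpos hσ N
  have hNpos : 0 < tot σ N := by
    simpa [tot_bot] using tot_strictMono hσ (bot_lt_iff_ne_bot.2 hN)
  refine ⟨(slope_le_iff_defect_nonpos hNpos).2 (hle.trans hone), fun hslope => heq ?_⟩
  have hzero := defect_slope_self Θ σ hNpos.ne'
  rw [hslope] at hzero
  linarith
end
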